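/- arXiv:2112.03183 — 2 statements merged into one kernel-verified Lean document; each statement's English description precedes it below -/
import Mathlib

section
/- Transforming a clique on ℓ ≥ 2 vertices into a different cluster graph (i.e., modifying any edge of the clique so the result is again a disjoint union of cliques) requires at least ℓ − 1 edge modifications. -/
/-- A cluster graph is a `P₃`-free graph: every two vertices with a common
neighbor are adjacent. -/
def IsClusterGraph {V : Type*} (G : SimpleGraph V) : Prop :=
  ∀ u v w : V, G.Adj u v → G.Adj v w → u ≠ w → G.Adj u w

theorem clique_modification_lower_bound {V : Type*} [Fintype V] [DecidableEq V]
    (ℓ : ℕ) (hV : Fintype.card V = ℓ) (hℓ : 2 ≤ ℓ)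
    (S : Finset (Sym2 V)) (hdiag : ∀ e ∈ S, ¬ e.IsDiag)
    (G' : SimpleGraph V)
    (hG' : G'.edgeSet = symmDiff ((⊤ : SimpleGraph V).edgeSet) (↑S : Set (Sym2 V)))
    (hcluster : IsClusterGraph G')
    (hne : G' ≠ ⊤) :
    ℓ - 1 ≤ S.card := by
  -- key characterization of adjacency in G'
  have key : ∀ a b : V, a ≠ b → (G'.Adj a b ↔ s(a, b) ∉ S) := by
    intro a b hab
    rw [← SimpleGraph.mem_edgeSet, hG', Set.mem_symmDiff]
    have htop : s(a, b) ∈ (⊤ : SimpleGraph V).edgeSet := by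
      simpa [SimpleGraph.mem_edgeSet] using hab
    constructor
    · rintro (⟨_, hS⟩ | ⟨_, hT⟩)
      · simpa using hS
      · exact absurd htop hT
    · intro hS
      exact Or.inl ⟨htop, by simpa using hS⟩
  -- get a nonadjacent pair
  obtain ⟨u, v, huv, hnadj⟩ : ∃ u v : V, u ≠ v ∧ ¬ G'.Adj u v := by
    by_contra h
    push_neg at h
    apply hne
    ext a b
    simp only [SimpleGraph.top_adj]
    exact ⟨fun h' => h'.ne, fun h' => h a b h'⟩
  have huvS : s(u, v) ∈ S := by
    by_contra h
    exact hnadj ((key u v huv).mpr h)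
  -- injective map from univ.erase u into S
  set f : V → Sym2 V := fun w =>
    if w = v then s(u, v) else if s(u, w) ∈ S then s(u, w) else s(w, v) with hf
  have hmaps : ∀ w ∈ (Finset.univ.erase u), f w ∈ S := by
    intro w hw
    have hwu : w ≠ u := Finset.ne_of_mem_erase hw
    by_cases hwv : w = v
    · simp [hf, hwv, huvS]
    · by_cases hS : s(u, w) ∈ S
      · simp [hf, hwv, hS]
      · simp only [hf, if_neg hwv, if_neg hS]
        by_contra h
        have h1 : G'.Adj u w := (key u w (Ne.symm hwu)).mpr hS
        have h2 : G'.Adj w v := (key w v hwv).mpr h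
        exact hnadj (hcluster u w v h1 h2 huv)
  have hinj : Set.InjOn f (Finset.univ.erase u) := by
    intro a ha b hb hab
    have hau : a ≠ u := Finset.ne_of_mem_erase ha
    have hbu : b ≠ u := Finset.ne_of_mem_erase hb
    by_cases hav : a = v <;> by_cases hbv : b = v <;>
      by_cases hSa : s(u, a) ∈ S <;> by_cases hSb : s(u, b) ∈ S <;>
      simp only [hf, hav, hbv, hSa, hSb, if_true, if_false, if_pos, if_neg,
        not_false_iff] at hab ⊢ <;>
      rw [Sym2.eq_iff] at hab <;>
      rcases hab with ⟨h1, h2⟩ | ⟨h1, h2⟩ <;> simp_all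
  have hcard := Finset.card_le_card_of_injOn f hmaps hinj
  have : (Finset.univ.erase u).card = ℓ - 1 := by
    rw [Finset.card_erase_of_mem (Finset.mem_univ u), Finset.card_univ, hV]
  omega
end

section
/- With A = n^{2d}, B = n^{3d}, C = n^{7d}, a_i, b_i, c_i ≤ n^d, t ≤ 3n^d, and k = Σ_{i=1}^n (binom(t+A+B+C,2) − binom(a_i+A,2) − binom(b_i+B,2) − binom(c_i+C,2)), if n ≥ 3 and d ≥ 1 then n^{10d+1} ≤ k ≤ 2n^{10d+1}. -/
lemma tmc (u : ℕ) : 2 * (u + 1).choose 2 = (u + 1) * u := by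
  induction u with
  | zero => rfl
  | succ v ih =>
    rw [Nat.choose_succ_succ (v+1) 1, Nat.mul_add, ih, Nat.choose_one_right]
    ring

lemma key (N a b c t : ℕ) (hN : 3 ≤ N) (ha1 : 1 ≤ a) (haN : a ≤ N)
    (hb1 : 1 ≤ b) (hbN : b ≤ N) (hc1 : 1 ≤ c) (hcN : c ≤ N)
    (ht1 : 1 ≤ t) (htN : t ≤ 3 * N) :
    N ^ 10 ≤ (t + N^2 + N^3 + N^7).choose 2
        - ((a + N^2).choose 2 + (b + N^3).choose 2 + (c + N^7).choose 2) ∧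
    (t + N^2 + N^3 + N^7).choose 2
        - ((a + N^2).choose 2 + (b + N^3).choose 2 + (c + N^7).choose 2) ≤ 2 * N ^ 10 := by
  obtain ⟨a', rfl⟩ : ∃ a', a = a' + 1 := ⟨a - 1, by omega⟩
  obtain ⟨b', rfl⟩ : ∃ b', b = b' + 1 := ⟨b - 1, by omega⟩
  obtain ⟨c', rfl⟩ : ∃ c', c = c' + 1 := ⟨c - 1, by omega⟩
  obtain ⟨t', rfl⟩ : ∃ t', t = t' + 1 := ⟨t - 1, by omega⟩
  have hx : 2 * (a' + 1 + N^2).choose 2 = (a' + N^2 + 1) * (a' + N^2) := by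
    rw [show a' + 1 + N^2 = (a' + N^2) + 1 by ring, tmc]
  have hy : 2 * (b' + 1 + N^3).choose 2 = (b' + N^3 + 1) * (b' + N^3) := by
    rw [show b' + 1 + N^3 = (b' + N^3) + 1 by ring, tmc]
  have hz : 2 * (c' + 1 + N^7).choose 2 = (c' + N^7 + 1) * (c' + N^7) := by
    rw [show c' + 1 + N^7 = (c' + N^7) + 1 by ring, tmc]
  have hs : 2 * (t' + 1 + N^2 + N^3 + N^7).choose 2
      = (t' + N^2 + N^3 + N^7 + 1) * (t' + N^2 + N^3 + N^7) := by
    rw [show t' + 1 + N^2 + N^3 + N^7 = (t' + N^2 + N^3 + N^7) + 1 by ring, tmc]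
  -- basic power comparisons
  have hN2 : 9 ≤ N^2 := le_trans (by norm_num) (Nat.pow_le_pow_left hN 2)
  have hN3 : 27 ≤ N^3 := le_trans (by norm_num) (Nat.pow_le_pow_left hN 3)
  have hN4 : 81 ≤ N^4 := le_trans (by norm_num) (Nat.pow_le_pow_left hN 4)
  have p1 : 3*N ≤ N^4 := by
    calc 3*N ≤ N^3*N := Nat.mul_le_mul_right _ (by omega)
      _ = N^4 := by ring
  have p2 : 3*(N^2) ≤ N^4 := by
    calc 3*N^2 ≤ N^2*N^2 := Nat.mul_le_mul_right _ (by omega)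
      _ = N^4 := by ring
  have p3 : 2*N^3 ≤ N^4 := by
    calc 2*N^3 ≤ N*N^3 := Nat.mul_le_mul_right _ (by omega)
      _ = N^4 := by ring
  have p4 : 81*N^4 ≤ N^8 := by
    calc 81*N^4 ≤ N^4*N^4 := Nat.mul_le_mul_right _ hN4
      _ = N^8 := by ring
  have p5 : 3*N^8 ≤ N^9 := by
    calc 3*N^8 ≤ N*N^8 := Nat.mul_le_mul_right _ (by omega)
      _ = N^9 := by ring
  have p6 : 3*N^9 ≤ N^10 := by
    calc 3*N^9 ≤ N*N^9 := Nat.mul_le_mul_right _ (by omega)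
      _ = N^10 := by ring
  have p7 : 27*N^5 ≤ N^8 := by
    calc 27*N^5 ≤ N^3*N^5 := Nat.mul_le_mul_right _ hN3
      _ = N^8 := by ring
  have p8 : 9*N^4 ≤ N^8 := by omega
  -- monomial bounds
  have h1 : a' * a' ≤ N^2 := by
    calc a' * a' ≤ N * N := Nat.mul_le_mul (by omega) (by omega)
      _ = N^2 := by ring
  have h2 : b' * b' ≤ N^2 := by
    calc b' * b' ≤ N * N := Nat.mul_le_mul (by omega) (by omega)
      _ = N^2 := by ring
  have h3 : c' * c' ≤ N^2 := by
    calc c' * c' ≤ N * N := Nat.mul_le_mul (by omega) (by omega)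
      _ = N^2 := by ring
  have h4 : a' * N^2 ≤ N^3 := by
    calc a' * N^2 ≤ N * N^2 := Nat.mul_le_mul_right _ (by omega)
      _ = N^3 := by ring
  have h5 : b' * N^3 ≤ N^4 := by
    calc b' * N^3 ≤ N * N^3 := Nat.mul_le_mul_right _ (by omega)
      _ = N^4 := by ring
  have h6 : c' * N^7 ≤ N^8 := by
    calc c' * N^7 ≤ N * N^7 := Nat.mul_le_mul_right _ (by omega)
      _ = N^8 := by ring
  have ht' : t' ≤ 3*N := by omega
  have h7 : t' * t' ≤ 9*N^2 := by
    calc t' * t' ≤ (3*N) * (3*N) := Nat.mul_le_mul ht' ht'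
      _ = 9*N^2 := by ring
  have h8 : t' * N^2 ≤ 3*N^3 := by
    calc t' * N^2 ≤ (3*N) * N^2 := Nat.mul_le_mul_right _ ht'
      _ = 3*N^3 := by ring
  have h9 : t' * N^3 ≤ 3*N^4 := by
    calc t' * N^3 ≤ (3*N) * N^3 := Nat.mul_le_mul_right _ ht'
      _ = 3*N^4 := by ring
  have h10 : t' * N^7 ≤ 3*N^8 := by
    calc t' * N^7 ≤ (3*N) * N^7 := Nat.mul_le_mul_right _ ht'
      _ = 3*N^8 := by ring
  have hlow : 2 * N^10 + 2*((a' + 1 + N^2).choose 2 + (b' + 1 + N^3).choose 2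
      + (c' + 1 + N^7).choose 2) ≤ 2 * (t' + 1 + N^2 + N^3 + N^7).choose 2 := by
    rw [Nat.mul_add, Nat.mul_add, hx, hy, hz, hs]
    have expand : (t' + N^2 + N^3 + N^7 + 1) * (t' + N^2 + N^3 + N^7)
        = t'*t' + t' + 2*(t'*N^2) + 2*(t'*N^3) + 2*(t'*N^7) + N^2 + N^3 + N^7
          + N^4 + N^6 + N^14 + 2*N^5 + 2*N^9 + 2*N^10 := by ring
    have expandL : (a' + N^2 + 1) * (a' + N^2) + (b' + N^3 + 1) * (b' + N^3)
        + (c' + N^7 + 1) * (c' + N^7)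
        = a'*a' + 2*(a'*N^2) + a' + N^4 + N^2 + (b'*b' + 2*(b'*N^3) + b' + N^6 + N^3)
          + (c'*c' + 2*(c'*N^7) + c' + N^14 + N^7) := by ring
    rw [expand, expandL]
    have hA : a' ≤ N := by omega
    have hB : b' ≤ N := by omega
    have hC : c' ≤ N := by omega
    -- suffices: a'²+2a'N²+a'+b'²+2b'N³+b'+c'²+2c'N⁷+c' ≤ 2N⁹
    linarith [h1, h2, h3, h4, h5, h6, p1, p2, p3, p4, p5,
      Nat.zero_le (t'*t'), Nat.zero_le (t'*N^2), Nat.zero_le (t'*N^3),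
      Nat.zero_le (t'*N^7), Nat.zero_le (N^5)]
  have hup : 2 * (t' + 1 + N^2 + N^3 + N^7).choose 2 ≤ 4 * N^10
      + 2*((a' + 1 + N^2).choose 2 + (b' + 1 + N^3).choose 2 + (c' + 1 + N^7).choose 2) := by
    rw [Nat.mul_add, Nat.mul_add, hx, hy, hz, hs]
    have expand : (t' + N^2 + N^3 + N^7 + 1) * (t' + N^2 + N^3 + N^7)
        = t'*t' + t' + 2*(t'*N^2) + 2*(t'*N^3) + 2*(t'*N^7) + N^2 + N^3 + N^7
          + N^4 + N^6 + N^14 + 2*N^5 + 2*N^9 + 2*N^10 := by ring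
    have expandL : (a' + N^2 + 1) * (a' + N^2) + (b' + N^3 + 1) * (b' + N^3)
        + (c' + N^7 + 1) * (c' + N^7)
        = a'*a' + 2*(a'*N^2) + a' + N^4 + N^2 + (b'*b' + 2*(b'*N^3) + b' + N^6 + N^3)
          + (c'*c' + 2*(c'*N^7) + c' + N^14 + N^7) := by ring
    rw [expand, expandL]
    -- suffices: t'² + 2t'N² + 2t'N³ + 2t'N⁷ + t' + 2N⁵ + 2N⁹ ≤ 4N¹⁰ + nonneg
    have q1 : 9*N^2 + 3*N + 6*N^3 + 6*N^4 + 2*N^5 ≤ 27*N^5 := by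
      have : N^2 ≤ N^5 := Nat.pow_le_pow_right (by omega) (by norm_num)
      have : N ≤ N^5 := by
        calc N = N^1 := (pow_one N).symm
          _ ≤ N^5 := Nat.pow_le_pow_right (by omega) (by norm_num)
      have : N^3 ≤ N^5 := Nat.pow_le_pow_right (by omega) (by norm_num)
      have : N^4 ≤ N^5 := Nat.pow_le_pow_right (by omega) (by norm_num)
      linarith
    linarith [h7, h8, h9, h10, q1, p5, p6, p7,
      Nat.zero_le (a'*a'), Nat.zero_le (b'*b'), Nat.zero_le (c'*c'),
      Nat.zero_le (a'*N^2), Nat.zero_le (b'*N^3), Nat.zero_le (c'*N^7),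
      Nat.zero_le a', Nat.zero_le b', Nat.zero_le c']
  refine ⟨?_, ?_⟩
  · have : N^10 + ((a' + 1 + N^2).choose 2 + (b' + 1 + N^3).choose 2
        + (c' + 1 + N^7).choose 2) ≤ (t' + 1 + N^2 + N^3 + N^7).choose 2 := by omega
    omega
  · omega

open Finset

theorem budget_bounds (n d : ℕ) (hn : 3 ≤ n) (hd : 1 ≤ d)
    (a b c : Fin n → ℕ) (t : ℕ)
    (hapos : ∀ i, 0 < a i) (hbpos : ∀ i, 0 < b i) (hcpos : ∀ i, 0 < c i)
    (ha : ∀ i, a i ≤ n ^ d) (hb : ∀ i, b i ≤ n ^ d) (hc : ∀ i, c i ≤ n ^ d)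
    (htpos : 0 < t) (ht : t ≤ 3 * n ^ d)
    (hsum : ∑ i, (a i + b i + c i) = n * t) :
    n ^ (10 * d + 1) ≤
        ∑ i, ((t + n ^ (2 * d) + n ^ (3 * d) + n ^ (7 * d)).choose 2
          - ((a i + n ^ (2 * d)).choose 2 + (b i + n ^ (3 * d)).choose 2
            + (c i + n ^ (7 * d)).choose 2)) ∧
      ∑ i, ((t + n ^ (2 * d) + n ^ (3 * d) + n ^ (7 * d)).choose 2
          - ((a i + n ^ (2 * d)).choose 2 + (b i + n ^ (3 * d)).choose 2
            + (c i + n ^ (7 * d)).choose 2)) ≤ 2 * n ^ (10 * d + 1) := by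
  have e2 : n ^ (2 * d) = (n ^ d) ^ 2 := by rw [← pow_mul, mul_comm]
  have e3 : n ^ (3 * d) = (n ^ d) ^ 3 := by rw [← pow_mul, mul_comm]
  have e7 : n ^ (7 * d) = (n ^ d) ^ 7 := by rw [← pow_mul, mul_comm]
  have e10 : n ^ (10 * d + 1) = n * (n ^ d) ^ 10 := by
    rw [← pow_mul, pow_add, pow_one, mul_comm 10 d, mul_comm (n ^ (d*10)) n]
  have hN : 3 ≤ n ^ d := le_trans hn (Nat.le_self_pow (by omega) n)
  rw [e2, e3, e7, e10]
  set N := n ^ d with hNdef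
  have hterm : ∀ i : Fin n,
      N ^ 10 ≤ (t + N^2 + N^3 + N^7).choose 2
        - ((a i + N^2).choose 2 + (b i + N^3).choose 2 + (c i + N^7).choose 2) ∧
      (t + N^2 + N^3 + N^7).choose 2
        - ((a i + N^2).choose 2 + (b i + N^3).choose 2 + (c i + N^7).choose 2) ≤ 2 * N ^ 10 :=
    fun i => key N (a i) (b i) (c i) t hN (hapos i) (ha i) (hbpos i) (hb i)
      (hcpos i) (hc i) htpos ht
  constructor
  · calc n * N ^ 10 = Finset.univ.card • N ^ 10 := by
          simp [Finset.card_univ, smul_eq_mul]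
      _ ≤ ∑ i : Fin n, ((t + N^2 + N^3 + N^7).choose 2
          - ((a i + N^2).choose 2 + (b i + N^3).choose 2 + (c i + N^7).choose 2)) :=
        Finset.card_nsmul_le_sum _ _ _ (fun i _ => (hterm i).1)
  · calc ∑ i : Fin n, ((t + N^2 + N^3 + N^7).choose 2
          - ((a i + N^2).choose 2 + (b i + N^3).choose 2 + (c i + N^7).choose 2))
        ≤ Finset.univ.card • (2 * N ^ 10) :=
          Finset.sum_le_card_nsmul _ _ _ (fun i _ => (hterm i).2)
      _ = 2 * (n * N ^ 10) := by simp [Finset.card_univ, smul_eq_mul]; ring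
end
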